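/- arXiv:2604.02588 — 3 statements merged into one kernel-verified Lean document; each statement's English description precedes it below -/
import Mathlib

section
/- Let X be a separable Banach lattice. Then the set {((x_n), x) ∈ X^ℕ × X : (x_n) converges uniformly to x} is a Borel subset of X^ℕ × X, where X^ℕ carries the product topology. -/
/-!
Write `t n = |x n - l|`. Uniform convergence of `x` to `l` is equivalent to the existence of
`c : ℕ` such that, for every `m`, all finite suprema `t a ⊔ ⋯ ⊔ t (a + j)` with `a` large have
norm at most `c / (m + 1) ^ 3`; this is a countable combination of closed conditions on `(x, l)`.
One direction is solidity of the norm. Conversely, choose blocks `[φ k, φ (k + 1)]` on which the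
supremum `V k` of `t` has norm at most `c / (k + 1) ^ 3`: then `z = ∑ (k + 1) • V k` converges,
since its terms have norm at most `c / (k + 1) ^ 2`, and `t n ≤ V k ≤ (k + 1)⁻¹ • z` on the
`k`-th block.
-/

open MeasureTheory

/-- A sequence `(x n)` in a Banach lattice converges uniformly to `l` if there is a `z`
such that for every `m ≥ 1`, `|x n - l| ≤ z / m` for all but finitely many `n`. -/
def UnifConvergesTo {X : Type*} [NormedAddCommGroup X] [Lattice X] [HasSolidNorm X]
    [IsOrderedAddMonoid X] [NormedSpace ℝ X]
    (x : ℕ → X) (l : X) : Prop :=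
  ∃ z : X, ∀ m : ℕ, 1 ≤ m → ∀ᶠ n in Filter.atTop, |x n - l| ≤ (m : ℝ)⁻¹ • z

open Filter

section BlockSup

variable {α : Type*} [Lattice α]

def blockSup (t : ℕ → α) (a j : ℕ) : α :=
  (Finset.Icc a (a + j)).sup' (Finset.nonempty_Icc.2 (Nat.le_add_right a j)) t

lemma le_blockSup {t : ℕ → α} {a j n : ℕ} (hn : n ∈ Finset.Icc a (a + j)) :
    t n ≤ blockSup t a j :=
  Finset.le_sup' t hn

lemma self_le_blockSup (t : ℕ → α) (a j : ℕ) : t a ≤ blockSup t a j :=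
  le_blockSup (Finset.left_mem_Icc.2 (Nat.le_add_right a j))

lemma blockSup_le {t : ℕ → α} {a j : ℕ} {w : α} (h : ∀ n ∈ Finset.Icc a (a + j), t n ≤ w) :
    blockSup t a j ≤ w :=
  Finset.sup'_le _ t h

lemma Continuous.blockSup [TopologicalSpace α] [ContinuousSup α] {Y : Type*} [TopologicalSpace Y]
    {f : Y → ℕ → α} (hf : ∀ n, Continuous fun y => f y n) (a j : ℕ) :
    Continuous fun y => blockSup (f y) a j :=
  Continuous.finset_sup'_apply _ fun n _ => hf n

end BlockSup

lemma StrictMono.exists_mem_Icc_of_le {φ : ℕ → ℕ} (hφ : StrictMono φ) {m n : ℕ} (hn : φ m ≤ n) :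
    ∃ k ≥ m, n ∈ Finset.Icc (φ k) (φ (k + 1)) := by
  have hex : ∃ k, n < φ (k + 1) := ⟨n, (Nat.lt_succ_self n).trans_le (hφ.le_apply)⟩
  refine ⟨Nat.find hex, ?_, Finset.mem_Icc.2 ⟨?_, (Nat.find_spec hex).le⟩⟩
  · by_contra! hlt
    exact (Nat.find_spec hex).not_ge (hn.trans' (hφ.monotone hlt))
  · rcases h : Nat.find hex with _ | k
    · exact (hφ.monotone (Nat.zero_le m)).trans hn
    · exact not_lt.1 (Nat.find_min hex (h ▸ Nat.lt_succ_self k))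

section SolidNorm

variable {X : Type*} [NormedAddCommGroup X] [Lattice X] [HasSolidNorm X] [IsOrderedAddMonoid X]

lemma norm_le_norm_of_nonneg_of_le {a b : X} (ha : 0 ≤ a) (hab : a ≤ b) : ‖a‖ ≤ ‖b‖ :=
  norm_le_norm_of_abs_le_abs (by rwa [abs_of_nonneg ha, abs_of_nonneg (ha.trans hab)])

lemma eventually_norm_blockSup_le {t : ℕ → X} (ht : ∀ n, 0 ≤ t n) {w : X}
    (h : ∀ᶠ n in atTop, t n ≤ w) : ∀ᶠ a in atTop, ∀ j, ‖blockSup t a j‖ ≤ ‖w‖ := by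
  obtain ⟨N, hN⟩ := eventually_atTop.1 h
  refine eventually_atTop.2 ⟨N, fun a ha j => norm_le_norm_of_nonneg_of_le ?_ ?_⟩
  · exact (ht a).trans (self_le_blockSup t a j)
  · exact blockSup_le fun n hn => hN n (ha.trans (Finset.mem_Icc.1 hn).1)

variable [NormedSpace ℝ X]

theorem exists_norm_blockSup_le_of_eventually_le_inv_smul {t : ℕ → X} (ht : ∀ n, 0 ≤ t n)
    {z : X} (hz : ∀ m : ℕ, 1 ≤ m → ∀ᶠ n in atTop, t n ≤ (m : ℝ)⁻¹ • z) :
    ∃ c : ℕ, ∀ m : ℕ, ∀ᶠ a in atTop, ∀ j, ‖blockSup t a j‖ ≤ c / ((m : ℝ) + 1) ^ 3 := by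
  refine ⟨⌈‖z‖⌉₊, fun m => ?_⟩
  have hm : 1 ≤ (m + 1) ^ 3 := Nat.one_le_pow _ _ m.succ_pos
  filter_upwards [eventually_norm_blockSup_le ht (hz _ hm)] with a ha j
  calc ‖blockSup t a j‖ ≤ ‖(((m + 1) ^ 3 : ℕ) : ℝ)⁻¹ • z‖ := ha j
    _ = ‖z‖ / ((m : ℝ) + 1) ^ 3 := by
      rw [norm_smul, norm_inv, div_eq_inv_mul]; push_cast; rw [Real.norm_of_nonneg (by positivity)]
    _ ≤ _ := by gcongr; exact Nat.le_ceil _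

variable [PosSMulMono ℝ X]

lemma le_inv_smul_tsum {V : ℕ → X} (hV : ∀ k, 0 ≤ V k)
    (hs : Summable fun k : ℕ => ((k : ℝ) + 1) • V k) (k : ℕ) :
    V k ≤ ((k : ℝ) + 1)⁻¹ • ∑' i : ℕ, ((i : ℝ) + 1) • V i := by
  have hk : ((k : ℝ) + 1) • V k ≤ ∑' i : ℕ, ((i : ℝ) + 1) • V i :=
    hs.le_tsum k fun i _ => smul_nonneg (by positivity) (hV i)
  calc V k = ((k : ℝ) + 1)⁻¹ • ((k : ℝ) + 1) • V k := by
        rw [inv_smul_smul₀ (by positivity)]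
    _ ≤ _ := smul_le_smul_of_nonneg_left hk (by positivity)

variable [CompleteSpace X]

theorem exists_eventually_le_inv_smul_of_norm_blockSup_le {t : ℕ → X} (ht : ∀ n, 0 ≤ t n) {c : ℝ}
    (hc : ∀ m : ℕ, ∀ᶠ a in atTop, ∀ j, ‖blockSup t a j‖ ≤ c / ((m : ℝ) + 1) ^ 3) :
    ∃ z : X, ∀ m : ℕ, 1 ≤ m → ∀ᶠ n in atTop, t n ≤ (m : ℝ)⁻¹ • z := by
  obtain ⟨φ, hφ, hφc⟩ := extraction_forall_of_eventually hc
  set V : ℕ → X := fun k => blockSup t (φ k) (φ (k + 1) - φ k)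
  have hV0 (k : ℕ) : 0 ≤ V k := (ht _).trans (self_le_blockSup _ _ _)
  have hVt (k : ℕ) : ∀ n ∈ Finset.Icc (φ k) (φ (k + 1)), t n ≤ V k := fun n hn =>
    le_blockSup (by rwa [Nat.add_sub_cancel' (hφ k.lt_succ_self).le])
  have hs : Summable fun k : ℕ => ((k : ℝ) + 1) • V k := by
    refine .of_norm_bounded (g := fun k : ℕ => c * (1 / ((k + 1 : ℕ) : ℝ) ^ 2)) ?_ fun k => ?_
    · exact ((summable_nat_add_iff 1).2 (Real.summable_one_div_nat_pow.2 one_lt_two)).mul_left c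
    · rw [norm_smul, Real.norm_of_nonneg (by positivity)]
      calc ((k : ℝ) + 1) * ‖V k‖ ≤ ((k : ℝ) + 1) * (c / ((k : ℝ) + 1) ^ 3) := by
            gcongr; exact hφc k _
        _ = _ := by push_cast; field_simp
  refine ⟨∑' i : ℕ, ((i : ℝ) + 1) • V i, fun m hm => eventually_atTop.2 ⟨φ m, fun n hn => ?_⟩⟩
  obtain ⟨k, hkm, hnk⟩ := hφ.exists_mem_Icc_of_le hn
  have hmk : ((k : ℝ) + 1)⁻¹ ≤ (m : ℝ)⁻¹ := by
    gcongr
    exact_mod_cast hkm.trans k.le_succ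
  calc t n ≤ V k := hVt k n hnk
    _ ≤ ((k : ℝ) + 1)⁻¹ • ∑' i : ℕ, ((i : ℝ) + 1) • V i := le_inv_smul_tsum hV0 hs k
    _ ≤ _ := smul_le_smul_of_nonneg_right hmk
      (tsum_nonneg fun i => smul_nonneg (by positivity) (hV0 i))

theorem unifConvergesTo_iff_norm_blockSup_le (x : ℕ → X) (l : X) :
    UnifConvergesTo x l ↔ ∃ c : ℕ, ∀ m : ℕ, ∀ᶠ a in atTop,
      ∀ j, ‖blockSup (fun n => |x n - l|) a j‖ ≤ c / ((m : ℝ) + 1) ^ 3 :=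
  ⟨fun ⟨_, hz⟩ => exists_norm_blockSup_le_of_eventually_le_inv_smul (fun _ => abs_nonneg _) hz,
    fun ⟨_, hc⟩ => exists_eventually_le_inv_smul_of_norm_blockSup_le (fun _ => abs_nonneg _) hc⟩

end SolidNorm

theorem stmt3_general {X : Type*} [NormedAddCommGroup X] [Lattice X] [HasSolidNorm X]
    [IsOrderedAddMonoid X] [NormedSpace ℝ X] [CompleteSpace X]
    [PosSMulStrictMono ℝ X] :
    MeasurableSet[borel ((ℕ → X) × X)]
      {p : (ℕ → X) × X | UnifConvergesTo p.1 p.2} := by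
  let _ := borel ((ℕ → X) × X)
  have : BorelSpace ((ℕ → X) × X) := ⟨rfl⟩
  have hcont (n : ℕ) : Continuous fun p : (ℕ → X) × X => |p.1 n - p.2| := by
    have h : Continuous fun p : (ℕ → X) × X => p.1 n - p.2 := by fun_prop
    exact h.sup h.neg
  have hclosed (a j : ℕ) (r : ℝ) :
      MeasurableSet {p : (ℕ → X) × X | ‖blockSup (fun n => |p.1 n - p.2|) a j‖ ≤ r} :=
    (isClosed_le (Continuous.blockSup hcont a j).norm continuous_const).measurableSet
  simp only [unifConvergesTo_iff_norm_blockSup_le, eventually_atTop, Set.ofPred_exists,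
    Set.ofPred_forall]
  exact .iUnion fun c => .iInter fun m => .iUnion fun N => .iInter fun a => .iInter fun _ =>
    .iInter fun j => hclosed a j _

theorem stmt3 {X : Type*} [NormedAddCommGroup X] [Lattice X] [HasSolidNorm X]
    [IsOrderedAddMonoid X] [NormedSpace ℝ X] [CompleteSpace X]
    [PosSMulStrictMono ℝ X] [PosSMulReflectLT ℝ X] [TopologicalSpace.SeparableSpace X] :
    MeasurableSet[borel ((ℕ → X) × X)]
      {p : (ℕ → X) × X | UnifConvergesTo p.1 p.2} :=
  stmt3_general
end

section
/- Let X be a σ-complete separable Banach lattice. Then the sets X_{↓0} = {(x_n) ∈ X^ℕ : x_1 ≥ x_2 ≥ … ≥ 0 and inf_n x_n = 0} and X^{↑∞} = {(x_n) ∈ X^ℕ : 0 ≤ x_1 ≤ x_2 ≤ … and {x_n : n ∈ ℕ} has no upper bound in X} are both Borel subsets of X^ℕ (with the product topology), and the set {((x_n), x) ∈ X^ℕ × X : (x_n) σ-order converges to x} is analytic. -/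
/-!
The substance is that the norm of a σ-complete separable Banach lattice is σ-order continuous:
a decreasing sequence with infimum `0` tends to `0` in norm. Then `X_{↓0}` is the set of
decreasing positive sequences tending to `0` and `X^{↑∞}` the set of increasing positive
sequences that do not converge, both Borel; σ-order convergence is the projection of a Borel
subset of `X^ℕ × X × X^ℕ` (the witness `z` being the extra coordinate), hence analytic.

If a decreasing `z ≥ 0` with infimum `0` were not Cauchy, it would contain blocks
`y k = z (a k) - z (a (k + 1)) ≥ 0` of norm `≥ ε` with partial sums below `z (a 0)`.
σ-completeness turns `A ↦ ∑ k ∈ A, y k` into a finitely additive measure `s` on `𝒫 ℕ`. Composing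
it with positive functionals `f n` norming `y n` and applying Rosenthal's lemma yields an infinite
`M ⊆ ℕ` on which `f n` essentially only sees `y n`; then the `s B`, `B ⊆ M`, are pairwise
`ε / 2` apart, which is impossible for uncountably many points of a separable space.
-/

open MeasureTheory

/-- The set of decreasing positive sequences in `X` whose range has `0` as greatest lower
bound. -/
def XDownZero (X : Type*) [NormedAddCommGroup X] [Lattice X] [IsOrderedAddMonoid X] [HasSolidNorm X] : Set (ℕ → X) :=
  {z | Antitone z ∧ (∀ n, 0 ≤ z n) ∧ IsGLB (Set.range z) 0}

/-- The set of increasing positive sequences in `X` whose range has no upper bound in `X`. -/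
def XUpInfty (X : Type*) [NormedAddCommGroup X] [Lattice X] [IsOrderedAddMonoid X] [HasSolidNorm X] : Set (ℕ → X) :=
  {x | Monotone x ∧ (∀ n, 0 ≤ x n) ∧ ¬∃ b : X, ∀ n, x n ≤ b}

/-- A sequence `(x n)` in a Banach lattice σ-order converges to `l` if there exists a decreasing
sequence `z 0 ≥ z 1 ≥ … ≥ 0` whose range has `0` as its greatest lower bound, such that for every
`m`, `|x n - l| ≤ z m` for all but finitely many `n`. -/
def SigmaOrderConvergesTo {X : Type*} [NormedAddCommGroup X] [Lattice X] [IsOrderedAddMonoid X] [HasSolidNorm X] (x : ℕ → X) (l : X) : Prop :=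
  ∃ z : ℕ → X, Antitone z ∧ (∀ m, 0 ≤ z m) ∧ IsGLB (Set.range z) 0 ∧
    ∀ m, ∀ᶠ n in Filter.atTop, |x n - l| ≤ z m

open Filter Topology Set

lemma posPart_smul_of_pos {𝕜 E : Type*} [Field 𝕜] [LinearOrder 𝕜] [IsStrictOrderedRing 𝕜]
    [AddCommGroup E] [Lattice E] [Module 𝕜 E] [PosSMulMono 𝕜 E] {c : 𝕜} (hc : 0 < c) (x : E) :
    (c • x)⁺ = c • x⁺ := by
  have h := (OrderIso.smulRight hc).map_sup x 0
  simp only [OrderIso.smulRight_apply, smul_zero] at h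
  rw [posPart_def, posPart_def, h]

section PositiveFunctional

variable {X : Type*} [NormedAddCommGroup X] [Lattice X] [IsOrderedAddMonoid X] [HasSolidNorm X]

lemma norm_posPart_le (x : X) : ‖x⁺‖ ≤ ‖x‖ :=
  norm_le_norm_of_abs_le_abs <| by
    rw [abs_of_nonneg (posPart_nonneg x)]
    exact sup_le (le_abs_self x) (abs_nonneg x)

lemma norm_posPart_add_le (x y : X) : ‖(x + y)⁺‖ ≤ ‖x⁺‖ + ‖y⁺‖ :=
  calc ‖(x + y)⁺‖ ≤ ‖x⁺ + y⁺‖ :=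
        norm_le_norm_of_abs_le_abs <| by
          rw [abs_of_nonneg (posPart_nonneg _),
            abs_of_nonneg (add_nonneg (posPart_nonneg x) (posPart_nonneg y))]
          exact sup_le (add_le_add (le_posPart x) (le_posPart y))
            (add_nonneg (posPart_nonneg x) (posPart_nonneg y))
    _ ≤ ‖x⁺‖ + ‖y⁺‖ := norm_add_le _ _

variable [NormedSpace ℝ X] [PosSMulMono ℝ X]

/-- Hahn–Banach with the sublinear functional `x ↦ ‖x⁺‖`: the extension is dominated by it,
which makes it positive and of norm at most one. -/
lemma exists_positive_functional_norming {y : X} (hy : 0 ≤ y) :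
    ∃ f : X →ₗ[ℝ] ℝ, (∀ v, 0 ≤ v → 0 ≤ f v) ∧ (∀ x, |f x| ≤ ‖x‖) ∧ f y = ‖y‖ := by
  rcases eq_or_ne y 0 with rfl | hy0
  · exact ⟨0, fun _ _ => le_rfl, fun x => by simp, by simp⟩
  set F : X →ₗ.[ℝ] ℝ := LinearPMap.mkSpanSingleton y ‖y‖ hy0
  have hF : ∀ v : F.domain, F v ≤ ‖(v : X)⁺‖ := by
    rintro ⟨v, hv⟩
    obtain ⟨c, rfl⟩ := Submodule.mem_span_singleton.1 hv
    rw [LinearPMap.mkSpanSingleton'_apply, smul_eq_mul]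
    rcases le_or_gt c 0 with hc | hc
    · exact (mul_nonpos_of_nonpos_of_nonneg hc (norm_nonneg _)).trans (norm_nonneg _)
    · rw [posPart_smul_of_pos hc, norm_smul, Real.norm_of_nonneg hc.le, posPart_eq_self.2 hy]
      rfl
  obtain ⟨f, hfF, hf⟩ := exists_extension_of_le_sublinear F (fun x => ‖x⁺‖)
    (fun c hc x => by rw [posPart_smul_of_pos hc, norm_smul, Real.norm_of_nonneg hc.le])
    norm_posPart_add_le hF
  have hf_le : ∀ x, f x ≤ ‖x‖ := fun x => (hf x).trans (norm_posPart_le x)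
  refine ⟨f, fun v hv => ?_, fun x => abs_le.2 ⟨?_, hf_le x⟩, ?_⟩
  · simpa [posPart_eq_zero.2 (neg_nonpos.2 hv)] using hf (-v)
  · linarith [(map_neg f x).symm.trans_le ((hf_le (-x)).trans_eq (norm_neg x))]
  · rw [hfF ⟨y, Submodule.mem_span_singleton_self y⟩]
    exact LinearPMap.mkSpanSingleton'_apply_self y ‖y‖ _ _

end PositiveFunctional

section Rosenthal

lemma monotone_of_nonneg_of_additive {α : Type*} {μ : Set α → ℝ} (h0 : ∀ A, 0 ≤ μ A)
    (hadd : ∀ A B, Disjoint A B → μ (A ∪ B) = μ A + μ B) : Monotone μ := by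
  intro A B hAB
  rw [← union_sdiff_cancel hAB, hadd A (B \ A) disjoint_sdiff_right]
  linarith [h0 (B \ A)]

/-- Rosenthal's lemma, by induction on `m`: if the measures fail on every fibre of
`j ↦ j.unpair.1`, then collapsing each fibre to a point raises every diagonal value `μ n {n}` by
`ε`, and this cannot go on beyond `C`. -/
lemma exists_infinite_forall_diff_singleton_le_of_lt {C ε : ℝ} (m : ℕ) (μ : ℕ → Set ℕ → ℝ)
    (h0 : ∀ n A, 0 ≤ μ n A) (hadd : ∀ n A B, Disjoint A B → μ n (A ∪ B) = μ n A + μ n B)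
    (hC : ∀ n A, μ n A ≤ C) (hdiag : ∀ n, C < μ n {n} + m * ε) :
    ∃ M : Set ℕ, M.Infinite ∧ ∀ n ∈ M, μ n (M \ {n}) ≤ ε := by
  induction m generalizing μ with
  | zero =>
    have := hdiag 0
    simp only [CharP.cast_eq_zero, zero_mul, add_zero] at this
    exact absurd this (hC 0 {0}).not_gt
  | succ m ih =>
    set π : ℕ → ℕ := fun j => j.unpair.1
    by_cases hgood : ∃ r, ∀ j ∈ π ⁻¹' {r}, μ j (π ⁻¹' {r} \ {j}) ≤ ε
    · obtain ⟨r, hr⟩ := hgood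
      refine ⟨π ⁻¹' {r}, infinite_of_injective_forall_mem (f := Nat.pair r)
        (fun a b h => (Nat.pair_eq_pair.1 h).2) ?_, hr⟩
      intro i
      simp [π]
    push Not at hgood
    choose j hjr hj using hgood
    have hπj : ∀ r, π (j r) = r := hjr
    have hdiag' : ∀ r, C < μ (j r) (π ⁻¹' {r}) + m * ε := by
      intro r
      have hsplit : π ⁻¹' {r} = {j r} ∪ (π ⁻¹' {r} \ {j r}) :=
        (union_sdiff_cancel (singleton_subset_iff.2 (hjr r))).symm
      rw [hsplit, hadd (j r) {j r} _ disjoint_sdiff_right]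
      have := hdiag (j r)
      have := hj r
      push_cast at *
      linarith
    obtain ⟨M, hMinf, hM⟩ := ih (fun r A => μ (j r) (π ⁻¹' A)) (fun r A => h0 _ _)
      (fun r A B hAB => hadd _ _ _ (hAB.preimage π)) (fun r A => hC _ _) hdiag'
    refine ⟨j '' M, hMinf.image (Function.LeftInverse.injective hπj).injOn, ?_⟩
    rintro _ ⟨r, hrM, rfl⟩
    refine (monotone_of_nonneg_of_additive (h0 _) (hadd _) ?_).trans (hM r hrM)
    rintro _ ⟨⟨r', hr'M, rfl⟩, hne⟩
    refine ⟨by simpa [hπj] using hr'M, fun h => hne ?_⟩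
    rw [mem_singleton_iff] at h ⊢
    rw [← h, hπj]

lemma exists_infinite_forall_diff_singleton_le (μ : ℕ → Set ℕ → ℝ) {C ε : ℝ} (hε : 0 < ε)
    (h0 : ∀ n A, 0 ≤ μ n A) (hadd : ∀ n A B, Disjoint A B → μ n (A ∪ B) = μ n A + μ n B)
    (hC : ∀ n A, μ n A ≤ C) : ∃ M : Set ℕ, M.Infinite ∧ ∀ n ∈ M, μ n (M \ {n}) ≤ ε := by
  obtain ⟨m, hm⟩ := exists_nat_gt (C / ε)
  refine exists_infinite_forall_diff_singleton_le_of_lt m μ h0 hadd hC fun n => ?_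
  rw [div_lt_iff₀ hε] at hm
  linarith [h0 n {n}]

end Rosenthal

section Additive

variable {E : Type*} [AddCommGroup E] [Lattice E] [IsOrderedAddMonoid E]

lemma isLUB_range_add_of_monotone {a b : ℕ → E} {α β : E} (ha : Monotone a) (hb : Monotone b)
    (hα : IsLUB (range a) α) (hβ : IsLUB (range b) β) :
    IsLUB (range fun n => a n + b n) (α + β) := by
  refine ⟨?_, fun c hc => ?_⟩
  · rintro _ ⟨n, rfl⟩
    exact add_le_add (hα.1 ⟨n, rfl⟩) (hβ.1 ⟨n, rfl⟩)
  have hab : ∀ m n, a m + b n ≤ c := fun m n =>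
    (add_le_add (ha (le_max_left m n)) (hb (le_max_right m n))).trans (hc ⟨max m n, rfl⟩)
  have hβc : ∀ m, β ≤ c - a m := fun m =>
    hβ.2 <| by rintro _ ⟨n, rfl⟩; exact le_sub_iff_add_le'.2 (hab m n)
  rw [← le_sub_iff_add_le]
  exact hα.2 <| by rintro _ ⟨m, rfl⟩; exact le_sub_comm.1 (hβc m)

lemma exists_additive_of_sum_range_le
    (hσ : ∀ x : ℕ → E, (∃ b : E, ∀ n, x n ≤ b) → ∃ s : E, IsLUB (range x) s)
    {y : ℕ → E} (hy : ∀ k, 0 ≤ y k) {u : E} (hu : ∀ K, ∑ k ∈ Finset.range K, y k ≤ u) :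
    ∃ s : Set ℕ → E, (∀ A, 0 ≤ s A) ∧ (∀ A, s A ≤ u) ∧
      (∀ A B, Disjoint A B → s (A ∪ B) = s A + s B) ∧ ∀ n, s {n} = y n := by
  set S : Set ℕ → ℕ → E := fun A K => ∑ k ∈ Finset.range K, A.indicator y k
  have hind : ∀ (A : Set ℕ) k, 0 ≤ A.indicator y k := fun A k =>
    indicator_nonneg (fun k _ => hy k) k
  have hS_mono : ∀ A, Monotone (S A) := fun A =>
    monotone_nat_of_le_succ fun K => by
      simpa [S, Finset.sum_range_succ] using hind A K
  have hS_le : ∀ A K, S A K ≤ u := fun A K =>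
    (Finset.sum_le_sum fun k _ => indicator_le_self' (fun k _ => hy k) k).trans (hu K)
  choose s hs using fun A => hσ (S A) ⟨u, hS_le A⟩
  refine ⟨s, fun A => ?_, fun A => (hs A).2 ?_, fun A B hAB => ?_, fun n => ?_⟩
  · simpa [S] using (hs A).1 ⟨0, rfl⟩
  · rintro _ ⟨K, rfl⟩
    exact hS_le A K
  · have hS_union : S (A ∪ B) = fun K => S A K + S B K := by
      funext K
      simp only [S, indicator_union_of_disjoint hAB, Finset.sum_add_distrib]
    have h := hs (A ∪ B)
    rw [hS_union] at h
    exact h.unique (isLUB_range_add_of_monotone (hS_mono A) (hS_mono B) (hs A) (hs B))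
  · have hS_single : ∀ K, S {n} K = if n ∈ Finset.range K then y n else 0 := fun K => by
      simp [S, indicator_apply, Finset.sum_ite_eq']
    refine (hs {n}).unique (IsGreatest.isLUB ⟨⟨n + 1, by simp [hS_single]⟩, ?_⟩)
    rintro _ ⟨K, rfl⟩
    rw [hS_single]
    split_ifs
    exacts [le_rfl, hy n]

end Additive

lemma exists_ne_dist_lt_of_separableSpace {α ι : Type*} [PseudoMetricSpace α]
    [TopologicalSpace.SeparableSpace α] [Uncountable ι] (g : ι → α) {δ : ℝ} (hδ : 0 < δ) :
    ∃ i j, i ≠ j ∧ dist (g i) (g j) < δ := by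
  by_contra! h
  have hdisj : (univ : Set ι).PairwiseDisjoint fun i => Metric.ball (g i) (δ / 2) :=
    fun i _ j _ hij => Metric.ball_disjoint_ball (by linarith [h i j hij])
  have := hdisj.countable_of_isOpen (fun _ _ => Metric.isOpen_ball)
    (fun i _ => Metric.nonempty_ball.2 (half_pos hδ))
  exact not_countable (countable_univ_iff.1 this)

lemma uncountable_set_nat : Uncountable (Set ℕ) :=
  ⟨fun _ => let ⟨f, hf⟩ := exists_injective_nat (Set ℕ); Function.cantor_injective f hf⟩

lemma exists_mem_notMem_dist_lt_of_separableSpace {α : Type*} [PseudoMetricSpace α]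
    [TopologicalSpace.SeparableSpace α] (g : Set ℕ → α) {δ : ℝ} (hδ : 0 < δ) :
    ∃ t t' i, i ∈ t ∧ i ∉ t' ∧ dist (g t) (g t') < δ := by
  have := uncountable_set_nat
  obtain ⟨t, t', hne, hlt⟩ := exists_ne_dist_lt_of_separableSpace g hδ
  obtain ⟨i, hi⟩ : ∃ i, ¬(i ∈ t ↔ i ∈ t') := not_forall.1 (mt Set.ext hne)
  by_cases hit : i ∈ t
  · exact ⟨t, t', i, hit, fun h => hi ⟨fun _ => h, fun _ => hit⟩, hlt⟩
  · exact ⟨t', t, i, by tauto, hit, by rwa [dist_comm]⟩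

section SigmaComplete

variable {X : Type*} [NormedAddCommGroup X] [Lattice X] [IsOrderedAddMonoid X] [HasSolidNorm X]
  [NormedSpace ℝ X] [PosSMulMono ℝ X]

lemma exists_norm_lt_of_sum_range_le [TopologicalSpace.SeparableSpace X]
    (hσ : ∀ x : ℕ → X, (∃ b : X, ∀ n, x n ≤ b) → ∃ s : X, IsLUB (range x) s)
    {y : ℕ → X} (hy : ∀ k, 0 ≤ y k) {u : X} (hu : ∀ K, ∑ k ∈ Finset.range K, y k ≤ u)
    {ε : ℝ} (hε : 0 < ε) : ∃ k, ‖y k‖ < ε := by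
  by_contra! hyε
  obtain ⟨s, hs0, hsu, hsadd, hsy⟩ := exists_additive_of_sum_range_le hσ hy hu
  choose f hf_pos hf_abs hf_y using fun k => exists_positive_functional_norming (hy k)
  have hμ0 : ∀ n A, 0 ≤ f n (s A) := fun n A => hf_pos n _ (hs0 A)
  have hμadd : ∀ n A B, Disjoint A B → f n (s (A ∪ B)) = f n (s A) + f n (s B) :=
    fun n A B hAB => by rw [hsadd A B hAB, map_add]
  have hμu : ∀ n A, f n (s A) ≤ ‖u‖ := fun n A =>
    (le_abs_self _).trans <| (hf_abs n _).trans <| norm_le_norm_of_abs_le_abs <| by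
      rw [abs_of_nonneg (hs0 A), abs_of_nonneg ((hs0 A).trans (hsu A))]
      exact hsu A
  obtain ⟨M, hMinf, hM⟩ := exists_infinite_forall_diff_singleton_le (fun n A => f n (s A))
    (half_pos hε) hμ0 hμadd hμu
  set φ : ℕ → ℕ := fun i => hMinf.natEmbedding _ i
  have hφ : φ.Injective := Subtype.val_injective.comp (hMinf.natEmbedding _).injective
  obtain ⟨t, t', i, hit, hit', hlt⟩ :=
    exists_mem_notMem_dist_lt_of_separableSpace (fun t => s (φ '' t)) (half_pos hε)
  have hmono := monotone_of_nonneg_of_additive (hμ0 (φ i)) (hμadd (φ i))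
  have hlarge : ε ≤ f (φ i) (s (φ '' t)) :=
    calc ε ≤ f (φ i) (s {φ i}) := by rw [hsy, hf_y]; exact hyε _
      _ ≤ f (φ i) (s (φ '' t)) := hmono (singleton_subset_iff.2 (mem_image_of_mem φ hit))
  have hsmall : f (φ i) (s (φ '' t')) ≤ ε / 2 := by
    refine (hmono ?_).trans (hM _ (hMinf.natEmbedding _ i).2)
    rintro _ ⟨j, hj, rfl⟩
    exact ⟨(hMinf.natEmbedding _ j).2, fun h => hit' (hφ h ▸ hj)⟩
  have hsep : ε / 2 ≤ dist (s (φ '' t)) (s (φ '' t')) :=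
    calc ε / 2 ≤ f (φ i) (s (φ '' t) - s (φ '' t')) := by rw [map_sub]; linarith
      _ ≤ ‖s (φ '' t) - s (φ '' t')‖ := (le_abs_self _).trans (hf_abs _ _)
      _ = dist (s (φ '' t)) (s (φ '' t')) := (dist_eq_norm _ _).symm
  exact hsep.not_gt hlt

end SigmaComplete

lemma exists_monotone_le_dist_of_not_cauchySeq {α : Type*} [PseudoMetricSpace α] {u : ℕ → α}
    (hu : ¬CauchySeq u) :
    ∃ ε > 0, ∃ a : ℕ → ℕ, Monotone a ∧ ∀ k, ε ≤ dist (u (a k)) (u (a (k + 1))) := by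
  simp only [Metric.cauchySeq_iff', not_forall, not_exists, not_lt] at hu
  obtain ⟨ε, hε, hu⟩ := hu
  choose m hm hdist using hu
  have ha : ∀ k, m^[k + 1] 0 = m (m^[k] 0) := fun k => Function.iterate_succ_apply' m k 0
  refine ⟨ε, hε, fun k => m^[k] 0, monotone_nat_of_le_succ fun k => ?_, fun k => ?_⟩
  · rw [ha]
    exact hm _
  · simp only [ha, dist_comm (u (m^[k] 0))]
    exact hdist _

section SigmaOrderContinuity

variable {X : Type*} [NormedAddCommGroup X] [Lattice X] [IsOrderedAddMonoid X] [HasSolidNorm X]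
  [NormedSpace ℝ X] [PosSMulMono ℝ X] [CompleteSpace X] [TopologicalSpace.SeparableSpace X]

lemma tendsto_nhds_zero_of_antitone_of_isGLB
    (hσ : ∀ x : ℕ → X, (∃ b : X, ∀ n, x n ≤ b) → ∃ s : X, IsLUB (range x) s)
    {z : ℕ → X} (hz : Antitone z) (hglb : IsGLB (range z) 0) : Tendsto z atTop (𝓝 0) := by
  suffices hcauchy : CauchySeq z by
    obtain ⟨l, hl⟩ := cauchySeq_tendsto_of_complete hcauchy
    rwa [(isGLB_of_tendsto_atTop hz hl).unique hglb] at hl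
  by_contra hcauchy
  obtain ⟨ε, hε, a, ha, hdist⟩ := exists_monotone_le_dist_of_not_cauchySeq hcauchy
  obtain ⟨k, hk⟩ := exists_norm_lt_of_sum_range_le hσ
    (fun k => sub_nonneg.2 (hz (ha k.le_succ))) (u := z (a 0))
    (fun K => by
      rw [Finset.sum_range_sub' (fun k => z (a k))]
      exact sub_le_self _ (hglb.1 ⟨a K, rfl⟩)) hε
  exact hk.not_ge (by rw [← dist_eq_norm]; exact hdist k)

lemma tendsto_of_monotone_of_bddAbove
    (hσ : ∀ x : ℕ → X, (∃ b : X, ∀ n, x n ≤ b) → ∃ s : X, IsLUB (range x) s)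
    {x : ℕ → X} (hx : Monotone x) (hbdd : ∃ b : X, ∀ n, x n ≤ b) :
    ∃ l, Tendsto x atTop (𝓝 l) := by
  obtain ⟨l, hl⟩ := hσ x hbdd
  have hglb : IsGLB (range fun n => l - x n) 0 := by
    refine ⟨?_, fun c hc => ?_⟩
    · rintro _ ⟨n, rfl⟩
      exact sub_nonneg.2 (hl.1 ⟨n, rfl⟩)
    · have : l ≤ l - c := hl.2 <| by rintro _ ⟨n, rfl⟩; exact le_sub_comm.1 (hc ⟨n, rfl⟩)
      simpa using this
  have h := (tendsto_nhds_zero_of_antitone_of_isGLB hσ (fun m n hmn => sub_le_sub_left (hx hmn) l)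
    hglb).const_sub l
  exact ⟨l, by simpa using h⟩

end SigmaOrderContinuity

lemma measurableSet_eventually_atTop {α : Type*} [MeasurableSpace α] {p : ℕ → α → Prop}
    (hp : ∀ n, MeasurableSet {a | p n a}) : MeasurableSet {a | ∀ᶠ n in atTop, p n a} := by
  have h : {a | ∀ᶠ n in atTop, p n a} = liminf (fun n => {a | p n a}) atTop :=
    Set.ext fun _ => mem_liminf_iff_eventually_mem.symm
  rw [h]
  exact MeasurableSet.measurableSet_liminf hp

section Borel

variable {X : Type*} [NormedAddCommGroup X] [Lattice X] [IsOrderedAddMonoid X] [HasSolidNorm X]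

lemma setOf_sigmaOrderConvergesTo_eq_image :
    {p : (ℕ → X) × X | SigmaOrderConvergesTo p.1 p.2} =
      Prod.fst '' {q : ((ℕ → X) × X) × (ℕ → X) |
        q.2 ∈ XDownZero X ∧ ∀ m, ∀ᶠ n in atTop, |q.1.1 n - q.1.2| ≤ q.2 m} := by
  ext p
  constructor
  · rintro ⟨z, hz, hz0, hglb, hconv⟩
    exact ⟨(p, z), ⟨⟨hz, hz0, hglb⟩, hconv⟩, rfl⟩
  · rintro ⟨⟨p, z⟩, ⟨⟨hz, hz0, hglb⟩, hconv⟩, rfl⟩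
    exact ⟨z, hz, hz0, hglb, hconv⟩

variable [TopologicalSpace.SeparableSpace X] [MeasurableSpace X] [BorelSpace X]

lemma measurableSet_forall_eventually_abs_sub_le :
    MeasurableSet
      {q : ((ℕ → X) × X) × (ℕ → X) | ∀ m, ∀ᶠ n in atTop, |q.1.1 n - q.1.2| ≤ q.2 m} := by
  rw [ofPred_forall]
  refine MeasurableSet.iInter fun m => measurableSet_eventually_atTop fun n => ?_
  have hsub : Continuous fun q : ((ℕ → X) × X) × (ℕ → X) => q.1.1 n - q.1.2 := by fun_prop
  exact (isClosed_le (hsub.sup hsub.neg) (by fun_prop)).measurableSet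

variable [NormedSpace ℝ X] [PosSMulMono ℝ X] [CompleteSpace X]

lemma measurableSet_XDownZero
    (hσ : ∀ x : ℕ → X, (∃ b : X, ∀ n, x n ≤ b) → ∃ s : X, IsLUB (range x) s) :
    MeasurableSet (XDownZero X) := by
  have h : XDownZero X = {z | Antitone z} ∩ Ici 0 ∩ {z | Tendsto z atTop (𝓝 0)} := by
    ext z
    refine ⟨fun ⟨hz, hz0, hglb⟩ => ⟨⟨hz, hz0⟩, tendsto_nhds_zero_of_antitone_of_isGLB hσ hz hglb⟩,
      fun ⟨⟨hz, hz0⟩, hlim⟩ => ⟨hz, hz0, isGLB_of_tendsto_atTop hz hlim⟩⟩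
  rw [h]
  exact (isClosed_antitone.measurableSet.inter measurableSet_Ici).inter
    (measurableSet_tendsto _ fun n => measurable_pi_apply n)

lemma measurableSet_XUpInfty
    (hσ : ∀ x : ℕ → X, (∃ b : X, ∀ n, x n ≤ b) → ∃ s : X, IsLUB (range x) s) :
    MeasurableSet (XUpInfty X) := by
  have h : XUpInfty X = {x | Monotone x} ∩ Ici 0 ∩ {x | ∃ l, Tendsto x atTop (𝓝 l)}ᶜ := by
    ext x
    refine ⟨fun ⟨hx, hx0, hunbdd⟩ => ⟨⟨hx, hx0⟩, fun ⟨l, hl⟩ => hunbdd ⟨l, hx.ge_of_tendsto hl⟩⟩,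
      fun ⟨⟨hx, hx0⟩, hlim⟩ =>
        ⟨hx, hx0, fun hbdd => hlim (tendsto_of_monotone_of_bddAbove hσ hx hbdd)⟩⟩
  rw [h]
  exact (isClosed_monotone.measurableSet.inter measurableSet_Ici).inter
    (measurableSet_exists_tendsto fun n => measurable_pi_apply n).compl

end Borel

theorem stmt8_general {X : Type*} [NormedAddCommGroup X] [Lattice X] [IsOrderedAddMonoid X] [HasSolidNorm X] [NormedSpace ℝ X] [CompleteSpace X]
    [PosSMulStrictMono ℝ X] [TopologicalSpace.SeparableSpace X]
    (hcomplete : ∀ x : ℕ → X, (∃ b : X, ∀ n, x n ≤ b) → ∃ s : X, IsLUB (Set.range x) s) :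
    MeasurableSet[borel (ℕ → X)] (XDownZero X) ∧
    MeasurableSet[borel (ℕ → X)] (XUpInfty X) ∧
    MeasureTheory.AnalyticSet {p : (ℕ → X) × X | SigmaOrderConvergesTo p.1 p.2} := by
  borelize X
  rw [← BorelSpace.measurable_eq (α := ℕ → X), setOf_sigmaOrderConvergesTo_eq_image]
  refine ⟨measurableSet_XDownZero hcomplete, measurableSet_XUpInfty hcomplete, ?_⟩
  exact ((measurable_snd (measurableSet_XDownZero hcomplete)).inter
    measurableSet_forall_eventually_abs_sub_le).analyticSet.image_of_continuous continuous_fst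

theorem stmt8 {X : Type*} [NormedAddCommGroup X] [Lattice X] [IsOrderedAddMonoid X] [HasSolidNorm X] [NormedSpace ℝ X] [CompleteSpace X]
    [PosSMulStrictMono ℝ X] [PosSMulReflectLT ℝ X] [TopologicalSpace.SeparableSpace X]
    (hcomplete : ∀ x : ℕ → X, (∃ b : X, ∀ n, x n ≤ b) → ∃ s : X, IsLUB (Set.range x) s) :
    MeasurableSet[borel (ℕ → X)] (XDownZero X) ∧
    MeasurableSet[borel (ℕ → X)] (XUpInfty X) ∧
    MeasureTheory.AnalyticSet {p : (ℕ → X) × X | SigmaOrderConvergesTo p.1 p.2} :=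
  stmt8_general hcomplete
end

section
/- Let X be a separable Banach lattice and suppose there is a countable ordinal α such that for every (z_n) ∈ X_{↓0} = {(z_n) ∈ X^ℕ : z_1 ≥ z_2 ≥ … ≥ 0 and inf_n z_n = 0}, the rank ρ(Ψ((z_n))) of the well-founded tree Ψ((z_n)) is at most α. Then X_{↓0} is a Borel subset of X^ℕ (with the product topology). -/
open MeasureTheory

/-- The tree `Ψ((z n))`: finite strings `(y 0, …, y (k-1))` of elements of `X` (coded as lists,
with `s.get i` corresponding to the paper's `y_{i+1}`) such that every entry is strictly
positive, `‖(y i - z n)⁺‖ ≤ ‖y i‖ / 3 ^ (i + 1)` for all entries and all `n`, and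
`‖y (i+1) - y i‖ ≤ ‖y i‖ / 3 ^ (i + 1)` for consecutive entries. -/
def PsiTree {X : Type*} [NormedAddCommGroup X] [Lattice X] [IsOrderedAddMonoid X] [HasSolidNorm X] (z : ℕ → X) : Set (List X) :=
  {s | (∀ (i : ℕ) (h : i < s.length), 0 < s.get ⟨i, h⟩) ∧
       (∀ (i : ℕ) (h : i < s.length) (n : ℕ),
         ‖(s.get ⟨i, h⟩ - z n)⁺‖ ≤ ‖s.get ⟨i, h⟩‖ / 3 ^ (i + 1)) ∧
       (∀ (i : ℕ) (h : i + 1 < s.length),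
         ‖s.get ⟨i + 1, h⟩ - s.get ⟨i, Nat.lt_of_succ_lt h⟩‖ ≤
           ‖s.get ⟨i, Nat.lt_of_succ_lt h⟩‖ / 3 ^ (i + 1))}

/-- `PsiRel z s t` holds when `s` and `t` both belong to the tree `Ψ((z n))` and `s` is a proper
extension of `t`.  Well-foundedness of this relation expresses that the tree `Ψ((z n))` has no
infinite branch, and the rank of the empty string in this relation is the rank `ρ_{Ψ}( ∅ )`. -/
def PsiRel {X : Type*} [NormedAddCommGroup X] [Lattice X] [IsOrderedAddMonoid X] [HasSolidNorm X] (z : ℕ → X) (s t : List X) : Prop :=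
  s ∈ PsiTree z ∧ t ∈ PsiTree z ∧ t <+: s ∧ t ≠ s

/-!
Fix a countable set `D` of strictly positive vectors that is dense in the positive cone. For an
ordinal `β` and a string `s`, the sequences `z` for which the subtree of `Ψ(z)` made of extensions
of `s` by entries of `D` has rank at most `β` at `s` are defined by transfinite recursion; for
countable `β` each recursion step is a countable intersection of countable unions of closed sets,
so these sets are Borel. If `z ∈ X_{↓0}` that subtree lies inside `Ψ(z)`, so its rank is at most
`α`. Conversely, if a positive sequence `z` has a lower bound `b ≰ 0`, then `b⁺ > 0` is a lower
bound too, and `D`-approximations of `b⁺` with errors shrinking like `3⁻ⁱ` form an infinite branch,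
so no rank bound holds. Hence `X_{↓0}` is a closed set intersected with a Borel set.
-/

section PsiTree

variable {X : Type*} [NormedAddCommGroup X] [Lattice X] [IsOrderedAddMonoid X] [HasSolidNorm X]

lemma nil_mem_psiTree (z : ℕ → X) : [] ∈ PsiTree z :=
  ⟨nofun, nofun, nofun⟩

lemma isClosed_setOf_mem_psiTree (s : List X) : IsClosed {z : ℕ → X | s ∈ PsiTree z} := by
  refine isClosed_const.inter (IsClosed.inter ?_ isClosed_const)
  change IsClosed {z | _}
  simp only [Set.ofPred_forall]
  exact isClosed_iInter fun i => isClosed_iInter fun _ => isClosed_iInter fun n =>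
    isClosed_le (by fun_prop) continuous_const

lemma norm_posPart_sub_le_of_le {a b c : X} (hbc : b ≤ c) : ‖(a - c)⁺‖ ≤ ‖a - b‖ := by
  have hzero : (b - c)⁺ = 0 := posPart_eq_zero.2 (sub_nonpos.2 hbc)
  have := norm_sup_sub_sup_le_norm (a - c) (b - c) 0
  rwa [← posPart_def, ← posPart_def, hzero, sub_zero, sub_sub_sub_cancel_right] at this

/-- `z ∈ psiRankLE D β s` says that in the subtree of `Ψ(z)` of strings extending `s` by entries
of `D`, the node `s` has rank at most `β` (whether or not `s` itself lies in `Ψ(z)`). -/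
noncomputable def psiRankLE (D : Set X) (β : Ordinal) (s : List X) : Set (ℕ → X) :=
  ⋂ d ∈ D, {z | s ++ [d] ∈ PsiTree z}ᶜ ∪ ⋃ γ < β, psiRankLE D γ (s ++ [d])
termination_by β

lemma mem_psiRankLE {D : Set X} {β : Ordinal} {s : List X} {z : ℕ → X} :
    z ∈ psiRankLE D β s ↔
      ∀ d ∈ D, s ++ [d] ∈ PsiTree z → ∃ γ < β, z ∈ psiRankLE D γ (s ++ [d]) := by
  rw [psiRankLE]
  simp [imp_iff_not_or]

lemma psiRankLE_mono (D : Set X) (s : List X) {β β' : Ordinal} (h : β ≤ β') :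
    psiRankLE D β s ⊆ psiRankLE D β' s := fun _ hz =>
  mem_psiRankLE.2 fun d hd hs =>
    let ⟨γ, hγ, hzγ⟩ := mem_psiRankLE.1 hz d hd hs
    ⟨γ, hγ.trans_le h, hzγ⟩

lemma measurableSet_psiRankLE {D : Set X} (hD : D.Countable) {β : Ordinal}
    (hβ : β.card ≤ Cardinal.aleph0) (s : List X) :
    MeasurableSet[borel (ℕ → X)] (psiRankLE D β s) := by
  borelize (ℕ → X)
  induction β using WellFoundedLT.induction generalizing s with
  | _ β ih =>
    have hIio : (Set.Iio β).Countable := by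
      rw [← Set.countable_coe_iff, ← Cardinal.mk_le_aleph0_iff, Cardinal.mk_Iio_ordinal]
      simpa using Cardinal.lift_le.2 hβ
    rw [psiRankLE]
    exact .biInter hD fun d _ => (isClosed_setOf_mem_psiTree _).measurableSet.compl.union <|
      .biUnion hIio fun γ hγ => ih γ hγ ((Ordinal.card_le_card (le_of_lt hγ)).trans hβ) _

lemma mem_psiRankLE_rank {z : ℕ → X} (wf : WellFounded (PsiRel z)) (D : Set X) :
    ∀ s ∈ PsiTree z, z ∈ psiRankLE D (wf.apply s).rank s := by
  intro s
  induction s using wf.induction with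
  | _ s ih =>
    intro hs
    refine mem_psiRankLE.2 fun d _ hsd => ?_
    have hrel : PsiRel z (s ++ [d]) s := ⟨hsd, hs, List.prefix_append _ _, by simp⟩
    exact ⟨_, (wf.apply s).rank_lt_of_rel hrel, ih _ hrel hsd⟩

lemma not_mem_psiRankLE_of_branch {D : Set X} {z d : ℕ → X} (hdD : ∀ i, d i ∈ D)
    (hd : ∀ k, List.ofFn (fun j : Fin k => d j) ∈ PsiTree z) (β : Ordinal) (k : ℕ) :
    z ∉ psiRankLE D β (List.ofFn fun j : Fin k => d j) := by
  induction β using WellFoundedLT.induction generalizing k with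
  | _ β ih =>
    intro hz
    have hsucc : List.ofFn (fun j : Fin (k + 1) => d j) =
        List.ofFn (fun j : Fin k => d j) ++ [d k] := by
      rw [List.ofFn_succ', List.concat_eq_append]
      rfl
    obtain ⟨γ, hγ, hzγ⟩ := mem_psiRankLE.1 hz (d k) (hdD k) (hsucc ▸ hd (k + 1))
    exact ih γ hγ (k + 1) (hsucc ▸ hzγ)

lemma exists_branch_of_pos_mem_lowerBounds {D : Set X} (hDpos : D ⊆ Set.Ioi 0)
    (hD : Set.Ioi 0 ⊆ closure D) {z : ℕ → X} {y : X} (hy : 0 < y)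
    (hyz : y ∈ lowerBounds (Set.range z)) :
    ∃ d : ℕ → X, (∀ i, d i ∈ D) ∧ ∀ k, List.ofFn (fun j : Fin k => d j) ∈ PsiTree z := by
  set r := ‖y‖
  have hr : 0 < r := norm_pos_iff.2 hy.ne'
  -- `δ i` is small enough that `2 * δ i ≤ ‖d i‖ / 3 ^ (i + 1)`, while both defining inequalities
  -- of `Ψ` have left-hand sides at most `2 * δ i`.
  set δ : ℕ → ℝ := fun i => r / 4 / 3 ^ (i + 1)
  have hδ : ∀ i, 0 < δ i := fun i => by positivity
  choose d hdD hd_dist using fun i => Metric.mem_closure_iff.1 (hD hy) (δ i) (hδ i)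
  have hd_near : ∀ i, ‖d i - y‖ ≤ δ i := fun i => by
    rw [← dist_eq_norm, dist_comm]; exact (hd_dist i).le
  have hδ_anti : ∀ i, δ (i + 1) ≤ δ i := fun i =>
    div_le_div_of_nonneg_left (by positivity) (by positivity)
      (pow_le_pow_right₀ (by norm_num) (Nat.le_succ _))
  have hδ_le : ∀ i, 2 * δ i ≤ ‖d i‖ / 3 ^ (i + 1) := fun i => by
    have hδ_small : δ i ≤ r / 4 := div_le_self (by positivity) (one_le_pow₀ (by norm_num))
    have hd_norm : r / 2 ≤ ‖d i‖ := by linarith [norm_le_insert (d i) y, hd_near i]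
    calc 2 * δ i = r / 2 / 3 ^ (i + 1) := by ring
      _ ≤ ‖d i‖ / 3 ^ (i + 1) := by gcongr
  refine ⟨d, hdD, fun k => ⟨fun i h => ?_, fun i h n => ?_, fun i h => ?_⟩⟩
  · simpa using hDpos (hdD i)
  · simp only [List.get_ofFn]
    calc ‖(d i - z n)⁺‖ ≤ ‖d i - y‖ := norm_posPart_sub_le_of_le (hyz ⟨n, rfl⟩)
      _ ≤ ‖d i‖ / 3 ^ (i + 1) := by linarith [hd_near i, hδ i, hδ_le i]
  · simp only [List.get_ofFn, Fin.val_cast]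
    have := dist_triangle_right (d (i + 1)) (d i) y
    rw [dist_eq_norm, dist_eq_norm, dist_eq_norm] at this
    linarith [hd_near i, hd_near (i + 1), hδ_anti i, hδ_le i]

lemma isGLB_range_of_mem_psiRankLE {D : Set X} (hDpos : D ⊆ Set.Ioi 0)
    (hD : Set.Ioi 0 ⊆ closure D) {z : ℕ → X} (hz_nonneg : ∀ n, 0 ≤ z n) {β : Ordinal}
    (hz : z ∈ psiRankLE D β []) : IsGLB (Set.range z) 0 := by
  refine ⟨Set.forall_mem_range.2 hz_nonneg, fun b hb => ?_⟩
  by_contra hb0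
  have hb_pos : 0 < b⁺ := (posPart_nonneg b).lt_of_ne' (mt posPart_eq_zero.1 hb0)
  have hb_lb : b⁺ ∈ lowerBounds (Set.range z) :=
    Set.forall_mem_range.2 fun n => sup_le (hb ⟨n, rfl⟩) (hz_nonneg n)
  obtain ⟨d, hdD, hd⟩ := exists_branch_of_pos_mem_lowerBounds hDpos hD hb_pos hb_lb
  exact not_mem_psiRankLE_of_branch hdD hd β 0 hz

end PsiTree

theorem stmt14_general {X : Type} [NormedAddCommGroup X] [Lattice X] [IsOrderedAddMonoid X] [HasSolidNorm X] [TopologicalSpace.SeparableSpace X]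
    (hα : ∃ α : Ordinal, α.card ≤ Cardinal.aleph0 ∧
      ∀ z ∈ XDownZero X, ∃ h : WellFounded (PsiRel z),
        (h.apply ([] : List X)).rank + 1 ≤ α) :
    MeasurableSet[borel (ℕ → X)] (XDownZero X) := by
  obtain ⟨α, hα_card, hα_rank⟩ := hα
  obtain ⟨D, hDpos, hDc, hD⟩ :=
    (TopologicalSpace.IsSeparable.of_separableSpace (Set.Ioi (0 : X))).exists_countable_dense_subset
  have hXDownZero : XDownZero X = {z | Antitone z} ∩ {z | 0 ≤ z} ∩ psiRankLE D α [] := by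
    ext z
    refine ⟨fun hz => ⟨⟨hz.1, hz.2.1⟩, ?_⟩,
      fun ⟨⟨hz_anti, hz_nonneg⟩, hz⟩ => ⟨hz_anti, hz_nonneg, ?_⟩⟩
    · obtain ⟨wf, hrank⟩ := hα_rank z hz
      exact psiRankLE_mono D [] ((Order.le_succ _).trans hrank)
        (mem_psiRankLE_rank wf D [] (nil_mem_psiTree z))
    · exact isGLB_range_of_mem_psiRankLE hDpos hD hz_nonneg hz
  borelize (ℕ → X)
  rw [hXDownZero]
  exact (isClosed_antitone.inter (isClosed_le continuous_const continuous_id)).measurableSet.inter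
    (measurableSet_psiRankLE hDc hα_card [])

theorem stmt14 {X : Type} [NormedAddCommGroup X] [Lattice X] [IsOrderedAddMonoid X] [HasSolidNorm X] [NormedSpace ℝ X] [CompleteSpace X]
    [PosSMulStrictMono ℝ X] [PosSMulReflectLT ℝ X] [TopologicalSpace.SeparableSpace X]
    (hα : ∃ α : Ordinal, α.card ≤ Cardinal.aleph0 ∧
      ∀ z ∈ XDownZero X, ∃ h : WellFounded (PsiRel z),
        (h.apply ([] : List X)).rank + 1 ≤ α) :
    MeasurableSet[borel (ℕ → X)] (XDownZero X) :=
  stmt14_general hα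
end
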